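/- arXiv:2112.03169 — 4 statements merged into one kernel-verified Lean document; each statement's English description precedes it below -/
import Mathlib

section
/- Let $k$ be a field, let $f_1, f_2 \in k((t))$, let $c \in k$, and let $F \in k[t_1^{\pm 1}, t_2^{\pm 1}]$ be a Laurent polynomial in two variables. Then $\mathrm{Res}_{t}\Big(\mathrm{Res}_{s}\Big(\Theta(f_1)\cdot f_2 \cdot \big(F(t+s,t)\, s^{-1} + c\, s^{-2}\big)\Big)\Big) \;=\; \mathrm{Res}_{t}\big(f_1 f_2 \cdot F(t,t)\big) \;+\; c\,\mathrm{Res}_{t}\big(f_2\, f_1'\big)$, where $f_1'$ is the formal derivative of $f_1$. (This is the residue formula for the diagonal residue of $f_i(t_i) f_j(t_j) \alpha$ with $\alpha = \frac{F(t_i,t_j)\,dt_i dt_j}{t_i-t_j} + \frac{c\, dt_i dt_j}{(t_i-t_j)^2}$, namely $\mathrm{res}\,\mathrm{res}_{i\to j} f_i f_j \alpha = \mathrm{res}(f_i f_j\, r'_{ij}(\alpha)) + c\,\mathrm{res}(f_j\, df_i)$.) -/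
noncomputable section

/-- The outer variable `s` of the iterated Laurent series field `k((t))((s))`. -/
def sVar (k : Type*) [Field k] : LaurentSeries (LaurentSeries k) :=
  HahnSeries.single 1 1

/-- The inner variable `t` of `k((t))((s))`, embedded as a constant. -/
def tVar₂ (k : Type*) [Field k] : LaurentSeries (LaurentSeries k) :=
  HahnSeries.single 0 (HahnSeries.single 1 1)

/-- The variable `t` of `k((t))`. -/
def tVar (k : Type*) [Field k] : LaurentSeries k := HahnSeries.single 1 1

/-- Evaluation of a two-variable Laurent polynomial, given by its finitely supported
coefficient function `F : ℤ × ℤ →₀ k`, at a pair of elements of a field extension `L` of `k`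
(the exponents are integer powers). -/
def evalLP {k L : Type*} [Field k] [Field L] [Algebra k L]
    (F : (ℤ × ℤ) →₀ k) (x y : L) : L :=
  ∑ p ∈ F.support, algebraMap k L (F p) * x ^ p.1 * y ^ p.2

/-!
Everything in sight is a power series in `s` except the explicit factors `s⁻¹` and `s⁻²`:
`Θ f₁ = f₁ + f₁' s + O(s²)`, and `F(t + s, t)` is a power series in `s` because `t + s` is a unit
of `k((t))[[s]]`. Hence the `s`-residue picks out the constant term `f₁ f₂ F(t, t)` of the first
summand and `c` times the linear coefficient `f₁' f₂` of the second.
-/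

open PowerSeries

theorem map_units_zpow {M N F : Type*} [Monoid M] [DivisionMonoid N] [FunLike F M N]
    [MonoidHomClass F M N] (f : F) (u : Mˣ) (n : ℤ) : f ↑(u ^ n) = f ↑u ^ n := by
  rw [← MonoidHom.coe_coe f, ← Units.coe_map, map_zpow, Units.val_zpow_eq_zpow_val,
    Units.coe_map]

namespace LaurentSeries

variable {R : Type*}

theorem coe_mk_coeff [Semiring R] {x : R⸨X⸩} (hx : ∀ n < 0, x.coeff n = 0) :
    ((mk fun n : ℕ ↦ x.coeff n : R⟦X⟧) : R⸨X⸩) = x := by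
  ext n
  rw [coeff_coe]
  split_ifs with hn
  · exact (hx n hn).symm
  · simp [Int.natAbs_of_nonneg (not_lt.mp hn)]

section Field

variable [Field R]

theorem coeff_coe_mul_single_zpow_neg (p : R⟦X⟧) (m : ℕ) (n : ℤ) :
    ((p : R⸨X⸩) * HahnSeries.single 1 1 ^ (-n)).coeff (m - n) = coeff m p := by
  rw [← RatFunc.single_zpow, sub_eq_add_neg, HahnSeries.coeff_mul_single_add, mul_one,
    coeff_coe_powerSeries]

theorem coeff_neg_one_coe_mul_single_zpow_neg_one (p : R⟦X⟧) :
    ((p : R⸨X⸩) * HahnSeries.single 1 1 ^ (-1 : ℤ)).coeff (-1) = constantCoeff p := by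
  simpa using coeff_coe_mul_single_zpow_neg p 0 1

theorem coeff_neg_one_coe_mul_single_zpow_neg_two (p : R⟦X⟧) :
    ((p : R⸨X⸩) * HahnSeries.single 1 1 ^ (-2 : ℤ)).coeff (-1) = coeff 1 p := by
  simpa using coeff_coe_mul_single_zpow_neg p 1 2

end Field

theorem exists_evalLP_coe {k L : Type*} [Field k] [Field L] [Algebra k L] (F : (ℤ × ℤ) →₀ k)
    {p q : L⟦X⟧} (hp : constantCoeff p ≠ 0) (hq : constantCoeff q ≠ 0) :
    ∃ r : L⟦X⟧, evalLP F (p : L⸨X⸩) (q : L⸨X⸩) = r ∧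
      constantCoeff r = evalLP F (constantCoeff p) (constantCoeff q) := by
  obtain ⟨u, rfl⟩ := isUnit_iff_constantCoeff.mpr hp.isUnit
  obtain ⟨v, rfl⟩ := isUnit_iff_constantCoeff.mpr hq.isUnit
  refine ⟨∑ i ∈ F.support, C (algebraMap k L (F i)) * ↑(u ^ i.1) * ↑(v ^ i.2), ?_, ?_⟩
  · simp only [evalLP, map_sum, map_mul, HahnSeries.algebraMap_apply',
      PowerSeries.algebraMap_apply, map_units_zpow]
  · simp only [evalLP, map_sum, map_mul, constantCoeff_C, map_units_zpow]

end LaurentSeries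

open LaurentSeries in
/-- The residue formula for the diagonal residue of `f₁(t₁) f₂(t₂) α` where
`α = F(t₁,t₂) (t₁-t₂)^{-1} dt₁dt₂ + c (t₁-t₂)^{-2} dt₁dt₂`:
`Res_t Res_s (Θ(f₁) · f₂ · (F(t+s,t) s^{-1} + c s^{-2})) = Res_t (f₁ f₂ F(t,t)) + c Res_t (f₂ f₁')`.
Here `Θ : k((t)) → k((t))((s))` is the Taylor substitution `t ↦ t + s`, specified by its
coefficients via generalized binomial coefficients, and `f₁'` is the formal derivative of
`f₁`, specified coefficientwise. -/
theorem diagonal_residue_pairing_formula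
    {k : Type*} [Field k]
    (f₁ f₂ : LaurentSeries k) (c : k) (F : (ℤ × ℤ) →₀ k)
    (Θ : LaurentSeries k → LaurentSeries (LaurentSeries k))
    (hΘneg : ∀ (f : LaurentSeries k) (n : ℤ), n < 0 → (Θ f).coeff n = 0)
    (hΘ : ∀ (f : LaurentSeries k) (n : ℤ), 0 ≤ n → ∀ r : ℤ,
      ((Θ f).coeff n).coeff r =
        ((Ring.choose (r + n) n.toNat : ℤ) : k) * f.coeff (r + n))
    (f₁' : LaurentSeries k)
    (hf₁' : ∀ n : ℤ, f₁'.coeff n = (n + 1) • f₁.coeff (n + 1)) :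
    ((Θ f₁ * HahnSeries.single 0 f₂ *
        (evalLP F (tVar₂ k + sVar k) (tVar₂ k) * sVar k ^ (-1 : ℤ) +
          algebraMap k (LaurentSeries (LaurentSeries k)) c * sVar k ^ (-2 : ℤ))).coeff
        (-1)).coeff (-1) =
      (f₁ * f₂ * evalLP F (tVar k) (tVar k)).coeff (-1) + c * (f₂ * f₁').coeff (-1) := by
  set θ : (LaurentSeries k)⟦X⟧ := mk fun n ↦ (Θ f₁).coeff n
  have hθ : Θ f₁ = θ := (coe_mk_coeff (hΘneg f₁)).symm
  have hθ₀ : constantCoeff θ = f₁ := by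
    ext r
    simpa [θ, ← coeff_zero_eq_constantCoeff_apply] using hΘ f₁ 0 le_rfl r
  have hθ₁ : coeff 1 θ = f₁' := by
    ext r
    simpa [θ, hf₁', Ring.choose_one_right] using hΘ f₁ 1 zero_le_one r
  have ht : tVar k ≠ 0 := HahnSeries.single_ne_zero one_ne_zero
  obtain ⟨e, he, he₀⟩ := exists_evalLP_coe F (p := C (tVar k) + X) (q := C (tVar k))
    (by simpa using ht) (by simpa using ht)
  simp only [map_add, coe_C, coe_X, constantCoeff_C, constantCoeff_X, add_zero] at he he₀
  have hf₂ : (HahnSeries.single 0 f₂ : LaurentSeries (LaurentSeries k)) = (C f₂ : _⟦X⟧) :=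
    (coe_C f₂).symm
  calc _ = (constantCoeff (θ * C f₂ * e) +
        coeff 1 (θ * C f₂ * C (algebraMap k (LaurentSeries k) c))).coeff (-1) := by
        rw [hθ, hf₂, sVar, show tVar₂ k = HahnSeries.C (tVar k) from rfl, he,
          HahnSeries.algebraMap_apply', PowerSeries.algebraMap_apply, mul_add, ← mul_assoc,
          ← mul_assoc, ← map_mul, ← map_mul, ← map_mul, HahnSeries.coeff_add,
          coeff_neg_one_coe_mul_single_zpow_neg_one, coeff_neg_one_coe_mul_single_zpow_neg_two]
    _ = (f₁ * f₂ * evalLP F (tVar k) (tVar k) + HahnSeries.C c * (f₂ * f₁')).coeff (-1) := by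
        rw [map_mul, map_mul, constantCoeff_C, hθ₀, he₀, coeff_mul_C, coeff_mul_C, hθ₁,
          LaurentSeries.algebraMap_apply, mul_comm _ (HahnSeries.C c), mul_comm f₁' f₂]
    _ = _ := by
        rw [HahnSeries.C_mul_eq_smul, HahnSeries.coeff_add, HahnSeries.coeff_smul, smul_eq_mul]
end
end

section
/- Let $F$ be a field, let $n \ge 3$, and let $z : \mathbb{Z}/n \to F$ satisfy $z_i \ne z_{i+1}$ for all $i \in \mathbb{Z}/n$. Then $\sum_{i \in \mathbb{Z}/n}\; \prod_{j \in \mathbb{Z}/n,\; j \ne i} \big(z_j - z_{j+1}\big)^{-1} \;=\; 0$. (This is the polygon relation among the logarithmic forms attached to an $n$-cycle: omitting one edge of the polygon at a time and summing gives zero; for $n=3$ it is the Arnol'd relation $g_{12}g_{23} + g_{23}g_{31} + g_{31}g_{12} = 0$.) -/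
/-- The polygon relation: for `n ≥ 3` and cyclically indexed points `z : ZMod n → F` with
consecutive points distinct, the sum over `i` of the products of the inverted consecutive
differences omitting the `i`-th edge vanishes. -/
theorem polygon_relation {F : Type*} [Field F] (n : ℕ) [NeZero n] (hn : 3 ≤ n)
    (z : ZMod n → F) (hz : ∀ i : ZMod n, z i ≠ z (i + 1)) :
    ∑ i : ZMod n, ∏ j ∈ Finset.univ.erase i, (z j - z (j + 1))⁻¹ = 0 := by
  have hd : ∀ i : ZMod n, z i - z (i + 1) ≠ 0 := fun i => sub_ne_zero.mpr (hz i)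
  have key : ∀ i : ZMod n, ∏ j ∈ Finset.univ.erase i, (z j - z (j + 1))⁻¹
      = (z i - z (i + 1)) * ∏ j : ZMod n, (z j - z (j + 1))⁻¹ := by
    intro i
    rw [← Finset.mul_prod_erase Finset.univ _ (Finset.mem_univ i), ← mul_assoc,
      mul_inv_cancel₀ (hd i), one_mul]
  simp_rw [key, ← Finset.sum_mul]
  have hsum : ∑ i : ZMod n, (z i - z (i + 1)) = 0 := by
    rw [Finset.sum_sub_distrib, sub_eq_zero]
    exact (Fintype.sum_equiv (Equiv.addRight 1) (fun i => z (i + 1)) z (fun i => rfl)).symm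
  rw [hsum, zero_mul]
end

section
/- Let $R$ be a commutative ring, $D : R \to R$ a derivation, and let $\hat{D}$ denote the coefficientwise extension of $D$ to the Laurent series ring $R((t))$. Fix $\tau \in R((t))$ and define the derivation $\tilde{D} : R((t)) \to R((t))$ by $\tilde{D}f := \hat{D}f + \tau \cdot f'$, where $f'$ is the formal derivative (so $\tilde{D}$ is a lift of $D$, extending it from $R$). Then for all $f, g \in R((t))$: $D\big(\mathrm{Res}(f \cdot g)\big) = \mathrm{Res}\big((\tilde{D}f)\cdot g\big) + \mathrm{Res}\big(f \cdot (\tilde{D}g + g\,\tau')\big)$. In particular, the right-hand side is independent of the choice of $\tau$ (i.e., of the choice of the lift $\tilde{D}$). (Here $g$ represents the relative differential $\alpha = g\,dt$, and $\tilde{D}g + g\tau'$ is its Lie derivative $\tilde{D}\alpha$ along the lift, so this is the identity $D(\mathrm{res}(f\alpha)) = \mathrm{res}((\tilde{D}f)\alpha) + \mathrm{res}(f\,\tilde{D}\alpha)$ for the residue pairing.) -/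
/-!
The coefficientwise extension `D̂` and the Euler operator `t d/dt` both act on a Laurent series
coefficient by coefficient, through maps satisfying a Leibniz rule graded by the exponent, so both
are derivations of `R((t))`; hence so is `d/dt = t⁻¹ · t d/dt`. Expanding with these product rules,
the right-hand side equals `Res(D̂(f g)) + Res((τ f g)')`. The first term is `D(Res(f g))`, and an
exact derivative has no residue.
-/

namespace HahnSeries

variable {Γ R : Type*} [PartialOrder Γ]

def mapCoeffs [AddCommMonoid R] (δ : Γ → R →+ R) (x : HahnSeries Γ R) : HahnSeries Γ R where
  coeff n := δ n (x.coeff n)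
  isPWO_support' := x.isPWO_support.mono fun n hn h => hn (by simp [h])

@[simp]
theorem coeff_mapCoeffs [AddCommMonoid R] (δ : Γ → R →+ R) (x : HahnSeries Γ R) (n : Γ) :
    (mapCoeffs δ x).coeff n = δ n (x.coeff n) :=
  rfl

theorem support_mapCoeffs_subset [AddCommMonoid R] (δ : Γ → R →+ R) (x : HahnSeries Γ R) :
    (mapCoeffs δ x).support ⊆ x.support :=
  fun n hn h => hn (by simp [h])

theorem mapCoeffs_mul [AddCommMonoid Γ] [IsOrderedCancelAddMonoid Γ]
    [NonUnitalNonAssocSemiring R] (δ : Γ → R →+ R)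
    (hδ : ∀ i j a b, δ (i + j) (a * b) = a * δ j b + δ i a * b) (x y : HahnSeries Γ R) :
    mapCoeffs δ (x * y) = x * mapCoeffs δ y + mapCoeffs δ x * y := by
  ext n
  rw [coeff_add, coeff_mul_right' y.isPWO_support (support_mapCoeffs_subset δ y),
    coeff_mul_left' x.isPWO_support (support_mapCoeffs_subset δ x), coeff_mapCoeffs, coeff_mul,
    map_sum, ← Finset.sum_add_distrib]
  refine Finset.sum_congr rfl fun ij hij => ?_
  rw [← (Finset.mem_antidiagonal.mp hij).2.2, hδ, coeff_mapCoeffs, coeff_mapCoeffs]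

end HahnSeries

namespace LaurentSeries

open HahnSeries

variable {R : Type*} [CommRing R]

theorem derivative_eq_single_mul_mapCoeffs (f : LaurentSeries R) :
    derivative R f = single (-1) 1 * mapCoeffs (fun n => n • AddMonoidHom.id R) f := by
  ext n
  rw [show n = n + 1 + -1 by ring, coeff_single_mul_add, one_mul, coeff_mapCoeffs]
  simp

theorem derivative_mul (f g : LaurentSeries R) :
    derivative R (f * g) = derivative R f * g + f * derivative R g := by
  have euler_leibniz : ∀ (i j : ℤ) (a b : R), (i + j) • AddMonoidHom.id R (a * b) =
      a * j • AddMonoidHom.id R b + i • AddMonoidHom.id R a * b := by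
    intro i j a b
    simp only [AddMonoidHom.id_apply]
    rw [add_smul, mul_smul_comm, smul_mul_assoc, add_comm]
  simp only [derivative_eq_single_mul_mapCoeffs,
    mapCoeffs_mul (fun n : ℤ => n • AddMonoidHom.id R) euler_leibniz]
  ring

theorem coeff_derivative_neg_one (f : LaurentSeries R) : (derivative R f).coeff (-1) = 0 := by
  simp

end LaurentSeries

/-- For a derivation `D` of a commutative ring `R`, its coefficientwise extension `hatD` to
`R((t))` and the lift `tildeD f = hatD f + τ · f'` (for a fixed `τ ∈ R((t))`), the residue
pairing satisfies `D(Res(f·g)) = Res((tildeD f)·g) + Res(f·(tildeD g + g·τ'))`, where the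
formal derivative `der` is specified coefficientwise.  (In particular, the right-hand side is
independent of the choice of the lift `τ`.) -/
theorem residue_pairing_derivation
    {R : Type*} [CommRing R]
    (D : R → R)
    (hDadd : ∀ a b : R, D (a + b) = D a + D b)
    (hDmul : ∀ a b : R, D (a * b) = a * D b + D a * b)
    (hatD : LaurentSeries R → LaurentSeries R)
    (hhatD : ∀ (f : LaurentSeries R) (n : ℤ), (hatD f).coeff n = D (f.coeff n))
    (der : LaurentSeries R → LaurentSeries R)
    (hder : ∀ (f : LaurentSeries R) (n : ℤ), (der f).coeff n = (n + 1) • f.coeff (n + 1))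
    (τ : LaurentSeries R) (f g : LaurentSeries R) :
    D ((f * g).coeff (-1)) =
      ((hatD f + τ * der f) * g).coeff (-1) +
        (f * ((hatD g + τ * der g) + g * der τ)).coeff (-1) := by
  let D' : R →+ R := AddMonoidHom.mk' D hDadd
  have hatD_eq : hatD = HahnSeries.mapCoeffs fun _ => D' :=
    funext fun x => HahnSeries.ext <| funext (hhatD x)
  have der_eq : der = LaurentSeries.derivative R :=
    funext fun x => HahnSeries.ext <| funext fun n => by simp [hder]
  have hatD_mul := HahnSeries.mapCoeffs_mul (fun _ => D') (fun _ _ => hDmul) f g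
  have split : (hatD f + τ * der f) * g + f * ((hatD g + τ * der g) + g * der τ) =
      hatD (f * g) + der (τ * (f * g)) := by
    rw [der_eq, LaurentSeries.derivative_mul, LaurentSeries.derivative_mul, hatD_eq, hatD_mul]
    ring
  rw [← HahnSeries.coeff_add, split, HahnSeries.coeff_add, der_eq,
    LaurentSeries.coeff_derivative_neg_one, add_zero, hatD_eq, HahnSeries.coeff_mapCoeffs]
  rfl
end

section
/- Let $R$ be a commutative ring and let $L$ be a Lie algebra over $R$ with trivial center (i.e., for every nonzero $x \in L$ there exists $z \in L$ with $[x,z] \ne 0$). Then the tensor square $L \otimes_R L$ is generated as an $R$-module by the pure tensors $x \otimes y$ with $[x,y] \ne 0$; that is, the $R$-span of $\{\, x \otimes y : x, y \in L,\ [x,y] \ne 0 \,\}$ is all of $L \otimes_R L$. -/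
open scoped TensorProduct

/-- If a Lie algebra `L` over a commutative ring `R` has trivial center, then the tensor
square `L ⊗[R] L` is spanned as an `R`-module by the pure tensors `x ⊗ y` with `⁅x,y⁆ ≠ 0`. -/
theorem tensorSquare_span_noncommuting_pairs
    {R : Type*} [CommRing R] {L : Type*} [LieRing L] [LieAlgebra R L]
    (hcenter : ∀ x : L, x ≠ 0 → ∃ z : L, ⁅x, z⁆ ≠ 0) :
    Submodule.span R {u : L ⊗[R] L | ∃ x y : L, ⁅x, y⁆ ≠ 0 ∧ u = x ⊗ₜ[R] y} = ⊤ := by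
  rw [eq_top_iff]
  rintro u -
  induction u using TensorProduct.induction_on with
  | zero => exact Submodule.zero_mem _
  | tmul x y =>
    by_cases hx : x = 0
    · simp [hx, Submodule.zero_mem]
    by_cases hxy : ⁅x, y⁆ = 0
    · obtain ⟨z, hz⟩ := hcenter x hx
      have h1 : x ⊗ₜ[R] (y + z) ∈
          Submodule.span R {u : L ⊗[R] L | ∃ x y : L, ⁅x, y⁆ ≠ 0 ∧ u = x ⊗ₜ[R] y} :=
        Submodule.subset_span ⟨x, y + z, by simp [lie_add, hxy, hz], rfl⟩
      have h2 : x ⊗ₜ[R] z ∈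
          Submodule.span R {u : L ⊗[R] L | ∃ x y : L, ⁅x, y⁆ ≠ 0 ∧ u = x ⊗ₜ[R] y} :=
        Submodule.subset_span ⟨x, z, hz, rfl⟩
      have heq : x ⊗ₜ[R] y = x ⊗ₜ[R] (y + z) - x ⊗ₜ[R] z := by
        rw [TensorProduct.tmul_add]; abel
      rw [heq]
      exact Submodule.sub_mem _ h1 h2
    · exact Submodule.subset_span ⟨x, y, hxy, rfl⟩
  | add a b ha hb => exact Submodule.add_mem _ ha hb
end
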